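/- arXiv:1404.6261 — 5 statements merged into one kernel-verified Lean document; each statement's English description precedes it below -/
import Mathlib

section
/- Every integer a with 1 ≤ a ≤ n can be written as a = u·v where v ≤ √n and either u ≤ n^(2/3) or u is a prime, with u ≥ v. -/
/-- Erdős's factorization observation: every `a ∈ [n]` can be written as `a = u * v`
with `u ≥ v`, `v ≤ √n`, and either `u ≤ n^(2/3)` or `u` prime. -/
theorem stmt_0 (n : ℕ) (hn : 1 ≤ n) (a : ℕ) (ha : a ∈ Finset.Icc 1 n) :
    ∃ u v : ℕ, 0 < u ∧ 0 < v ∧ a = u * v ∧ v ≤ u ∧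
      (v : ℝ) ≤ Real.sqrt n ∧
      ((u : ℝ) ≤ (n : ℝ) ^ ((2 : ℝ) / 3) ∨ u.Prime) := by
  obtain ⟨ha1, ha2⟩ := Finset.mem_Icc.mp ha
  have ha0 : a ≠ 0 := by omega
  set S : Finset ℕ := a.divisors.filter (fun d => d * d ≤ a) with hS
  have h1S : 1 ∈ S := by
    simp [hS, Nat.one_mem_divisors, ha0, ha1]
  have hne : S.Nonempty := ⟨1, h1S⟩
  set v := S.max' hne with hvdef
  have hvS : v ∈ S := S.max'_mem hne
  have hvd : v ∣ a := (Nat.mem_divisors.mp (Finset.mem_filter.mp hvS).1).1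
  have hv2 : v * v ≤ a := by
    have := (Finset.mem_filter.mp hvS).2
    simpa using this
  have hmax : ∀ d, d ∣ a → d * d ≤ a → d ≤ v := by
    intro d hd hd2
    exact S.le_max' d (Finset.mem_filter.mpr ⟨Nat.mem_divisors.mpr ⟨hd, ha0⟩, by simpa using hd2⟩)
  have hvpos : 0 < v := Nat.pos_of_dvd_of_pos hvd (by omega)
  set u := a / v with hudef
  have huv : u * v = a := Nat.div_mul_cancel hvd
  have hupos : 0 < u := Nat.div_pos (Nat.le_of_dvd (by omega) hvd) hvpos
  have hvu : v ≤ u := Nat.le_of_mul_le_mul_right (by omega) hvpos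
  refine ⟨u, v, hupos, hvpos, huv.symm, hvu, ?_, ?_⟩
  · have h2 : ((v:ℝ))^2 ≤ (n:ℝ) := by
      have : v * v ≤ n := hv2.trans ha2
      have := (Nat.cast_le (α := ℝ)).mpr this
      push_cast at this
      nlinarith
    nlinarith [Real.sq_sqrt (show (0:ℝ) ≤ (n:ℝ) by positivity), Real.sqrt_nonneg (n:ℝ), Nat.cast_nonneg (α := ℝ) v, sq_nonneg ((v:ℝ) - Real.sqrt n)]
  · by_cases hp : u.Prime
    · exact Or.inr hp
    · left
      -- show u^3 ≤ n^2 in ℕ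
      have key : u ^ 3 ≤ n ^ 2 := by
        rcases Nat.eq_or_lt_of_le hupos with h1 | h2
        · -- u = 1
          have : u = 1 := h1.symm
          simp [this]
          nlinarith
        · -- u ≥ 2, composite
          set q := u.minFac with hq
          have hqprime : q.Prime := Nat.minFac_prime (by omega)
          have hq2 : 2 ≤ q := hqprime.two_le
          have hqsq : q * q ≤ u := by
            have := Nat.minFac_sq_le_self hupos hp
            simpa [pow_two] using this
          have hqd : q ∣ u := Nat.minFac_dvd u
          obtain ⟨w, hw⟩ := hqd
          by_cases hcase : u ≤ v * q * q
          · -- then w ≤ v, u ≤ q*v, u ≤ v^2, u^3 ≤ a^2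
            have hwv : w ≤ v := by
              apply hmax
              · exact Dvd.dvd.trans ⟨q, by rw [hw]; ring⟩ ⟨v, huv.symm⟩
              · -- w * w ≤ a
                have hwvq : w ≤ v * q := by nlinarith
                calc w * w ≤ v * q * w := Nat.mul_le_mul_right w hwvq
                  _ = u * v := by rw [hw]; ring
                  _ = a := huv
            have huqv : u ≤ q * v := by rw [hw]; exact Nat.mul_le_mul_left q hwv
            have huv2 : u ≤ v * v := by nlinarith
            calc u ^ 3 = u * u * u := by ring
              _ ≤ (v * v) * u * u := by nlinarith
              _ = (u * v) * (u * v) := by ring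
              _ = a * a := by rw [huv]
              _ ≤ n ^ 2 := by nlinarith
          · -- v*q*q < u : contradiction with maximality via vq
            exfalso
            have hvq : v * q ∣ a := by
              refine ⟨w, ?_⟩
              rw [← huv, hw]; ring
            have : v * q ≤ v := by
              apply hmax _ hvq
              calc v * q * (v * q) = v * (v * q * q) := by ring
                _ ≤ v * u := Nat.mul_le_mul_left v (by omega)
                _ = a := by rw [← huv]; ring
            nlinarith
      -- convert to ℝ
      have keyR : ((u:ℝ)) ^ (3:ℕ) ≤ ((n:ℝ)) ^ (2:ℕ) := by exact_mod_cast key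
      have hrhs : ((n:ℝ) ^ ((2:ℝ)/3)) ^ (3:ℕ) = (n:ℝ) ^ (2:ℕ) := by
        rw [← Real.rpow_natCast (n:ℝ) 2, ← Real.rpow_natCast ((n:ℝ) ^ ((2:ℝ)/3)) 3,
          ← Real.rpow_mul (by positivity)]
        norm_num
      have := keyR.trans_eq hrhs.symm
      exact le_of_pow_le_pow_left₀ (by norm_num) (by positivity) this
end

section
/- Let B be a bipartite graph with parts U and V with |U| = m and |V| = n, and let d be the average degree of the vertices of V (so d = e(B)/n). If n·d² ≥ 4m² and d ≥ 2, then the number of 4-cycles in B is at least n²d⁴/(64m²). -/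
/-!
Count cherries `u – v – u'` (with `u < u'` in `U`, `v ∈ V`) in two ways: by their middle vertex
`v`, giving `t = ∑_v C(deg v, 2)`, and by their ends, giving `t = ∑_{u < u'} codeg(u, u')`;
likewise the 4-cycles number `∑_{u < u'} C(codeg(u, u'), 2)`. The convexity bound
`(∑ x)² ≤ k ∑ (2 C(x, 2) + x)` over `k` terms gives `t ≥ n d² / 4 ≥ m²` from the degrees, and then,
applied to the `C(m, 2) ≤ t / 2` codegrees, that the number of 4-cycles is at least `t² / (2 m²)`.
-/

open Finset

theorem Nat.sq_eq_two_mul_choose_two_add (k : ℕ) : k ^ 2 = 2 * k.choose 2 + k := by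
  induction k with
  | zero => rfl
  | succ k ih => rw [Nat.choose_succ_succ, Nat.choose_one_right]; grind

namespace Finset

variable {ι α β : Type*}

theorem sq_sum_le_card_mul_sum_two_mul_choose_two_add (s : Finset ι) (f : ι → ℕ) :
    (∑ i ∈ s, f i) ^ 2 ≤ #s * (2 * ∑ i ∈ s, (f i).choose 2 + ∑ i ∈ s, f i) := by
  calc (∑ i ∈ s, f i) ^ 2 ≤ #s * ∑ i ∈ s, f i ^ 2 := sq_sum_le_card_mul_sum_sq
    _ = #s * (2 * ∑ i ∈ s, (f i).choose 2 + ∑ i ∈ s, f i) := by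
      simp only [Nat.sq_eq_two_mul_choose_two_add, sum_add_distrib, mul_sum]

theorem card_filter_product_eq_sum_left (s : Finset α) (t : Finset β) (p : α × β → Prop)
    [DecidablePred p] : #{x ∈ s ×ˢ t | p x} = ∑ a ∈ s, #{b ∈ t | p (a, b)} := by
  simp only [card_filter, sum_product]

theorem card_filter_product_eq_sum_right (s : Finset α) (t : Finset β) (p : α × β → Prop)
    [DecidablePred p] : #{x ∈ s ×ˢ t | p x} = ∑ b ∈ t, #{a ∈ s | p (a, b)} := by
  simp only [card_filter, sum_product_right]

theorem card_filter_product_filter_lt [LinearOrder α] (s : Finset α) (q : α → Prop)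
    [DecidablePred q] :
    #{x ∈ {x ∈ s ×ˢ s | x.1 < x.2} | q x.1 ∧ q x.2} = (#{a ∈ s | q a}).choose 2 := by
  rw [← card_product_filter_lt]
  congr 1
  ext x
  simp only [mem_filter, mem_product]
  tauto

end Finset

section Bipartite

variable {α β : Type*} (U : Finset α) (V : Finset β) (E : Finset (α × β))

theorem card_edges_eq_sum_degree [DecidableEq α] [DecidableEq β] (hE : E ⊆ U ×ˢ V) :
    #E = ∑ v ∈ V, #{u ∈ U | (u, v) ∈ E} := by
  rw [← card_filter_product_eq_sum_right U V (· ∈ E), filter_mem_eq_inter,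
    inter_eq_right.mpr hE]

theorem sum_choose_two_degree_eq_sum_codegree [LinearOrder α] [DecidableEq β] :
    ∑ v ∈ V, (#{u ∈ U | (u, v) ∈ E}).choose 2 =
      ∑ p ∈ {x ∈ U ×ˢ U | x.1 < x.2}, #{v ∈ V | (p.1, v) ∈ E ∧ (p.2, v) ∈ E} := by
  simp only [← card_filter_product_filter_lt]
  exact (card_filter_product_eq_sum_right _ V
    fun x : (α × α) × β => (x.1.1, x.2) ∈ E ∧ (x.1.2, x.2) ∈ E).symm.trans
    (card_filter_product_eq_sum_left _ _ _)

theorem card_fourCycles_eq_sum_choose_two_codegree [LinearOrder α] [LinearOrder β] :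
    #{x ∈ {p ∈ U ×ˢ U | p.1 < p.2} ×ˢ {q ∈ V ×ˢ V | q.1 < q.2} |
        (x.1.1, x.2.1) ∈ E ∧ (x.1.1, x.2.2) ∈ E ∧ (x.1.2, x.2.1) ∈ E ∧ (x.1.2, x.2.2) ∈ E} =
      ∑ p ∈ {x ∈ U ×ˢ U | x.1 < x.2}, (#{v ∈ V | (p.1, v) ∈ E ∧ (p.2, v) ∈ E}).choose 2 := by
  rw [card_filter_product_eq_sum_left]
  refine sum_congr rfl fun p _ => ?_
  rw [← card_filter_product_filter_lt]
  congr 1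
  ext q
  simp only [mem_filter]
  tauto

end Bipartite

theorem stmt_1_general (U V : Finset ℕ) (E : Finset (ℕ × ℕ)) (hE : E ⊆ U ×ˢ V)
    (m n : ℕ) (hm : U.card = m) (hn : V.card = n)
    (d : ℝ) (hd : d = (E.card : ℝ) / n)
    (h1 : (n : ℝ) * d ^ 2 ≥ 4 * (m : ℝ) ^ 2) (h2 : d ≥ 2) :
    ((n : ℝ) ^ 2 * d ^ 4 / (64 * (m : ℝ) ^ 2)) ≤
      (((((U ×ˢ U).filter fun p => p.1 < p.2) ×ˢ
          ((V ×ˢ V).filter fun q => q.1 < q.2)).filter fun x =>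
            (x.1.1, x.2.1) ∈ E ∧ (x.1.1, x.2.2) ∈ E ∧
            (x.1.2, x.2.1) ∈ E ∧ (x.1.2, x.2.2) ∈ E).card : ℝ) := by
  have hdeg := sq_sum_le_card_mul_sum_two_mul_choose_two_add V
    fun v => #{u ∈ U | (u, v) ∈ E}
  have hcodeg := sq_sum_le_card_mul_sum_two_mul_choose_two_add {x ∈ U ×ˢ U | x.1 < x.2}
    fun p => #{v ∈ V | (p.1, v) ∈ E ∧ (p.2, v) ∈ E}
  rw [← card_edges_eq_sum_degree U V E hE, hn] at hdeg
  rw [← sum_choose_two_degree_eq_sum_codegree, card_product_filter_lt, hm] at hcodeg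
  rw [card_fourCycles_eq_sum_choose_two_codegree]
  set t := ∑ v ∈ V, (#{u ∈ U | (u, v) ∈ E}).choose 2
  set c := ∑ p ∈ {x ∈ U ×ˢ U | x.1 < x.2}, (#{v ∈ V | (p.1, v) ∈ E ∧ (p.2, v) ∈ E}).choose 2
  have hn0 : (n : ℝ) ≠ 0 := by rintro h; rw [hd, h, div_zero] at h2; norm_num at h2
  have hedges : (#E : ℝ) = n * d := by rw [hd]; field_simp
  have hdeg' : ((n : ℝ) * d) ^ 2 ≤ n * (2 * t + n * d) := by
    rw [← hedges]; exact_mod_cast hdeg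
  have ht : (n : ℝ) * d ^ 2 / 4 ≤ t := by
    have hnpos : (0 : ℝ) < n := n.cast_nonneg.lt_of_ne' hn0
    have h : (n : ℝ) * d ^ 2 ≤ 2 * t + n * d := le_of_mul_le_mul_left (by linarith) hnpos
    nlinarith
  have hcodeg' : (t : ℝ) ^ 2 ≤ (m * (m - 1) / 2) * (2 * c + t) := by
    rw [← Nat.cast_choose_two]; exact_mod_cast hcodeg
  have hc : (t : ℝ) ^ 2 ≤ 2 * m ^ 2 * c := by
    have hM : (m : ℝ) * (m - 1) / 2 ≤ m ^ 2 / 2 := by linarith [m.cast_nonneg (α := ℝ)]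
    nlinarith [t.cast_nonneg (α := ℝ), c.cast_nonneg (α := ℝ)]
  obtain rfl | hm0 := m.eq_zero_or_pos
  · simp
  rw [div_le_iff₀ (by positivity)]
  nlinarith

/-- In a bipartite graph `B` with parts `U` (size `m`) and `V` (size `n`), where the
average degree of vertices of `V` is `d = e(B)/n`, if `n·d² ≥ 4m²` and `d ≥ 2` then the
number of 4-cycles is at least `n²d⁴/(64m²)`. 4-cycles are counted as unordered:
pairs `u < u'` in `U` and `v < v'` in `V` with all four edges present. -/
theorem stmt_1 (U V : Finset ℕ) (E : Finset (ℕ × ℕ)) (hE : E ⊆ U ×ˢ V)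
    (m n : ℕ) (hm : U.card = m) (hn : V.card = n) (hnpos : 0 < n)
    (d : ℝ) (hd : d = (E.card : ℝ) / n)
    (h1 : (n : ℝ) * d ^ 2 ≥ 4 * (m : ℝ) ^ 2) (h2 : d ≥ 2) :
    ((n : ℝ) ^ 2 * d ^ 4 / (64 * (m : ℝ) ^ 2)) ≤
      (((((U ×ˢ U).filter fun p => p.1 < p.2) ×ˢ
          ((V ×ˢ V).filter fun q => q.1 < q.2)).filter fun x =>
            (x.1.1, x.2.1) ∈ E ∧ (x.1.1, x.2.2) ∈ E ∧
            (x.1.2, x.2.1) ∈ E ∧ (x.1.2, x.2.2) ∈ E).card : ℝ) :=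
  stmt_1_general U V E hE m n hm hn d hd h1 h2
end

section
/- If g₁,...,g_m ≥ 0 are nonnegative integers with total excess Σ(gᵢ − 1)₊ ≥ g, and 0 < p < 1, then the product Π_{i=1}^m [(1−p)^{gᵢ} + gᵢ·p·(1−p)^{gᵢ−1}] is at most ((1−p)² + 2p(1−p))^{g/2} = (1−p²)^{g/2}. -/
lemma key_stmt7 (p : ℝ) (hp0 : 0 < p) (hp1 : p < 1) (a : ℕ) :
    (1 - p) ^ a + (a : ℝ) * p * (1 - p) ^ (a - 1)
      ≤ (1 - p ^ 2) ^ (max ((a : ℝ) - 1) 0 / 2 : ℝ) := by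
  have hq0 : (0:ℝ) < 1 - p := by linarith
  have hP0 : (0:ℝ) < 1 - p ^ 2 := by nlinarith
  cases a with
  | zero => simp
  | succ b =>
    have hmax : max (((b+1 : ℕ) : ℝ) - 1) 0 = (b : ℝ) := by
      push_cast; simp
    rw [hmax]
    have hL : (1 - p) ^ (b+1) + ((b+1 : ℕ) : ℝ) * p * (1 - p) ^ (b + 1 - 1)
        = (1 - p) ^ b * (1 + (b : ℝ) * p) := by
      push_cast; ring
    rw [hL]
    have h1 : (1:ℝ) + (b : ℝ) * p ≤ (1 + p) ^ b := by
      have := one_add_mul_le_pow (a := p) (by linarith) b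
      linarith
    have hbp : (0:ℝ) ≤ 1 + (b:ℝ) * p := by positivity
    have hsq : ((1 - p) ^ b * (1 + (b:ℝ) * p)) ^ 2 ≤ (1 - p ^ 2) ^ b := by
      have h2 : ((1 - p) ^ b * (1 + (b:ℝ) * p)) ^ 2
          ≤ ((1 - p) ^ b * (1 + p) ^ b) ^ 2 := by
        gcongr
      have h3 : ((1 - p) ^ b * (1 + p) ^ b) ^ 2 = ((1 - p ^ 2) ^ b) ^ 2 := by
        rw [← mul_pow, show (1 - p) * (1 + p) = 1 - p ^ 2 by ring]
      have h5 : (1 - p ^ 2) ^ b ≤ 1 := pow_le_one₀ hP0.le (by nlinarith)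
      have h4 : ((1 - p ^ 2) ^ b) ^ 2 ≤ (1 - p ^ 2) ^ b := by
        nlinarith [pow_pos hP0 b]
      calc ((1 - p) ^ b * (1 + (b:ℝ) * p)) ^ 2 ≤ _ := h2
        _ = _ := h3
        _ ≤ _ := h4
    have hsqrt : (1 - p) ^ b * (1 + (b:ℝ) * p) ≤ Real.sqrt ((1 - p ^ 2) ^ b) := by
      rw [show ((1 - p) ^ b * (1 + (b:ℝ) * p)) = Real.sqrt (((1 - p) ^ b * (1 + (b:ℝ) * p))^2)
        from (Real.sqrt_sq (by positivity)).symm]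
      exact Real.sqrt_le_sqrt hsq
    calc (1 - p) ^ b * (1 + (b:ℝ) * p) ≤ Real.sqrt ((1 - p ^ 2) ^ b) := hsqrt
      _ = (1 - p ^ 2) ^ ((b : ℝ) / 2 : ℝ) := by
          rw [Real.sqrt_eq_rpow, ← Real.rpow_natCast (1 - p ^ 2) b,
            ← Real.rpow_mul hP0.le]
          ring_nf

/-- If nonnegative integers `g₁,...,g_m` have total excess `Σ (gᵢ - 1)₊ ≥ g` and
`0 < p < 1`, then `Π [(1-p)^{gᵢ} + gᵢ p (1-p)^{gᵢ-1}] ≤ (1-p²)^{g/2}`. -/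
theorem stmt_7 (m : ℕ) (gs : Fin m → ℕ) (p : ℝ) (hp0 : 0 < p) (hp1 : p < 1)
    (g : ℝ) (hg : 0 ≤ g)
    (hsum : g ≤ ∑ i, max ((gs i : ℝ) - 1) 0) :
    (∏ i, ((1 - p) ^ (gs i) + (gs i : ℝ) * p * (1 - p) ^ (gs i - 1)))
      ≤ (1 - p ^ 2) ^ (g / 2 : ℝ) := by
  have hq0 : (0:ℝ) < 1 - p := by linarith
  have hP0 : (0:ℝ) < 1 - p ^ 2 := by nlinarith
  calc (∏ i, ((1 - p) ^ (gs i) + (gs i : ℝ) * p * (1 - p) ^ (gs i - 1)))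
      ≤ ∏ i, (1 - p ^ 2) ^ (max ((gs i : ℝ) - 1) 0 / 2 : ℝ) := by
        apply Finset.prod_le_prod
        · intro i _; positivity
        · intro i _; exact key_stmt7 p hp0 hp1 (gs i)
    _ = (1 - p ^ 2) ^ (∑ i, (max ((gs i : ℝ) - 1) 0 / 2) : ℝ) := by
        rw [Real.rpow_sum_of_pos hP0]
    _ ≤ (1 - p ^ 2) ^ (g / 2 : ℝ) := by
        apply Real.rpow_le_rpow_of_exponent_ge hP0 (by nlinarith)
        rw [← Finset.sum_div]
        linarith
end

section
/- For every integer a ≥ 2 and p ∈ (0,1), (1−p)^a + a·p·(1−p)^{a−1} ≤ (1 − p²)^{(a−1)/2}. -/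
/-- For integers `a ≥ 2` and `p ∈ (0,1)`,
`(1-p)^a + a p (1-p)^{a-1} ≤ (1-p²)^{(a-1)/2}`. -/
theorem stmt_8 (a : ℕ) (ha : 2 ≤ a) (p : ℝ) (hp0 : 0 < p) (hp1 : p < 1) :
    (1 - p) ^ a + (a : ℝ) * p * (1 - p) ^ (a - 1)
      ≤ (1 - p ^ 2) ^ (((a : ℝ) - 1) / 2) := by
  obtain ⟨n, rfl⟩ : ∃ n, a = n + 1 := ⟨a - 1, by omega⟩
  have hq0 : (0:ℝ) < 1 - p := by linarith
  have hb0 : (0:ℝ) < 1 - p ^ 2 := by nlinarith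
  have hb1 : (1:ℝ) - p ^ 2 ≤ 1 := by nlinarith
  have hfac : (1 - p) ^ (n + 1) + ((n + 1 : ℕ) : ℝ) * p * (1 - p) ^ (n + 1 - 1)
      = (1 - p) ^ n * (1 + (n : ℝ) * p) := by
    push_cast
    ring
  rw [hfac]
  have hbern : 1 + (n : ℝ) * p ≤ (1 + p) ^ n := by
    have := one_add_mul_le_pow (a := p) (by linarith) n
    linarith
  have h1 : (1 - p) ^ n * (1 + (n : ℝ) * p) ≤ (1 - p ^ 2) ^ n := by
    calc (1 - p) ^ n * (1 + (n : ℝ) * p) ≤ (1 - p) ^ n * (1 + p) ^ n :=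
          mul_le_mul_of_nonneg_left hbern (by positivity)
      _ = (1 - p ^ 2) ^ n := by rw [← mul_pow]; ring_nf
  have h2 : (1 - p ^ 2) ^ n ≤ (1 - p ^ 2) ^ ((((n:ℕ) + 1 : ℝ) - 1) / 2) := by
    rw [← Real.rpow_natCast (1 - p ^ 2) n]
    apply Real.rpow_le_rpow_of_exponent_ge hb0 hb1
    have : (0:ℝ) ≤ (n:ℝ) := n.cast_nonneg
    ring_nf
    linarith
  calc (1 - p) ^ n * (1 + (n : ℝ) * p) ≤ (1 - p ^ 2) ^ n := h1
    _ ≤ _ := by push_cast at h2 ⊢; exact h2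
end

section
/- Modified local lemma: let A₁,...,A_n be events in a probability space, and for each i let (J_i, K_i) be a partition of {1,...,n}\{i}. Suppose there is γ ∈ [0,1) such that for every i and every K ⊆ K_i, P(A_i | ∩_{k∈K} \overline{A_k}) ≤ γ(1 − γ·max_j |J_j|). Then P(∩_{i=1}^n \overline{A_i}) > 0. -/
/-!
Write `P S` for the probability that none of the events indexed by `S` occurs. By strong
induction on `S`, `P(A i ∩ ⋂_{k ∈ S} Aₖᶜ) ≤ γ P S` whenever `i ∉ S`: with `T = S ∩ K i`, the
hypothesis bounds the left side by `γ (1 - γ |J i|)⁺ P T`, while the union bound over the at most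
`|J i|` indices of `S \ T`, each controlled by the induction hypothesis at `T`, gives
`(1 - γ |J i|)⁺ P T ≤ P S`. Adding the events one at a time then yields
`P(⋂ᵢ Aᵢᶜ) ≥ (1 - γ)ⁿ > 0`.
-/

open MeasureTheory Finset

section

variable {Ω ι : Type*} [MeasurableSpace Ω] (μ : Measure Ω) [IsFiniteMeasure μ] (A : ι → Set Ω)

lemma measureReal_le_max_mul_of_le_ofReal_mul {s t : Set Ω} {c : ℝ}
    (h : μ s ≤ ENNReal.ofReal c * μ t) : μ.real s ≤ max c 0 * μ.real t := by
  rw [← ENNReal.toReal_ofReal', Measure.real, Measure.real, ← ENNReal.toReal_mul]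
  exact ENNReal.toReal_mono (by finiteness) h

lemma measureReal_biInter_compl_le_add_sum [DecidableEq ι] (S T : Finset ι) :
    μ.real (⋂ k ∈ T, (A k)ᶜ) ≤
      μ.real (⋂ k ∈ S, (A k)ᶜ) + ∑ j ∈ S \ T, μ.real (A j ∩ ⋂ k ∈ T, (A k)ᶜ) := by
  have hcover : (⋂ k ∈ T, (A k)ᶜ) ⊆
      (⋂ k ∈ S, (A k)ᶜ) ∪ ⋃ j ∈ S \ T, (A j ∩ ⋂ k ∈ T, (A k)ᶜ) := by
    intro x hx
    by_cases hhit : ∃ j ∈ S \ T, x ∈ A j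
    · obtain ⟨j, hj, hxj⟩ := hhit
      exact Or.inr (Set.mem_biUnion hj ⟨hxj, hx⟩)
    · push Not at hhit
      refine Or.inl (Set.mem_iInter₂.mpr fun k hk => ?_)
      by_cases hkT : k ∈ T
      · exact Set.mem_iInter₂.mp hx k hkT
      · exact hhit k (mem_sdiff.mpr ⟨hk, hkT⟩)
  calc μ.real (⋂ k ∈ T, (A k)ᶜ)
      ≤ μ.real ((⋂ k ∈ S, (A k)ᶜ) ∪ ⋃ j ∈ S \ T, (A j ∩ ⋂ k ∈ T, (A k)ᶜ)) :=
        measureReal_mono hcover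
    _ ≤ _ := (measureReal_union_le _ _).trans (by gcongr; exact measureReal_biUnion_finset_le _ _)

lemma one_sub_pow_card_mul_le_measureReal_biInter_compl [DecidableEq ι] {γ : ℝ} (hγ : γ ≤ 1)
    (hlocal : ∀ (S : Finset ι), ∀ i ∉ S,
      μ.real (A i ∩ ⋂ k ∈ S, (A k)ᶜ) ≤ γ * μ.real (⋂ k ∈ S, (A k)ᶜ))
    (S : Finset ι) :
    (1 - γ) ^ #S * μ.real Set.univ ≤ μ.real (⋂ k ∈ S, (A k)ᶜ) := by
  induction S using Finset.induction_on with
  | empty => simp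
  | insert j S hj ih =>
    have hsplit : μ.real (⋂ k ∈ S, (A k)ᶜ) ≤
        μ.real (⋂ k ∈ insert j S, (A k)ᶜ) + μ.real (A j ∩ ⋂ k ∈ S, (A k)ᶜ) := by
      refine (measureReal_biInter_compl_le_add_sum μ A (insert j S) S).trans_eq ?_
      rw [insert_sdiff_of_notMem _ hj, sdiff_self, bot_eq_empty, insert_empty, sum_singleton]
    have hstep := hlocal S j hj
    rw [card_insert_of_notMem hj, pow_succ]
    nlinarith [sub_nonneg.mpr hγ]

lemma measureReal_inter_biInter_compl_le [Fintype ι] [DecidableEq ι] {J K : ι → Finset ι}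
    (hJK : ∀ i, univ.erase i ⊆ J i ∪ K i) {γ : ℝ} (hγ : 0 ≤ γ)
    (hcond : ∀ i, ∀ T ⊆ K i, μ.real (A i ∩ ⋂ k ∈ T, (A k)ᶜ) ≤
      γ * max (1 - γ * #(J i)) 0 * μ.real (⋂ k ∈ T, (A k)ᶜ))
    (S : Finset ι) : ∀ i ∉ S,
      μ.real (A i ∩ ⋂ k ∈ S, (A k)ᶜ) ≤ γ * μ.real (⋂ k ∈ S, (A k)ᶜ) := by
  induction S using Finset.strongInduction with
  | H S ih =>
  intro i hi
  set T := S ∩ K i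
  have hTS : T ⊆ S := inter_subset_left
  have hST : S \ T ⊆ J i := by
    intro j hj
    obtain ⟨hjS, hjT⟩ := mem_sdiff.mp hj
    have hjK : j ∉ K i := fun h => hjT (mem_inter.mpr ⟨hjS, h⟩)
    have hji : j ∈ univ.erase i := mem_erase.mpr ⟨fun h => hi (h ▸ hjS), mem_univ j⟩
    exact (mem_union.mp (hJK i hji)).resolve_right hjK
  have hPT := measureReal_nonneg (μ := μ) (s := ⋂ k ∈ T, (A k)ᶜ)
  have hsum : ∑ j ∈ S \ T, μ.real (A j ∩ ⋂ k ∈ T, (A k)ᶜ) ≤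
      #(J i) * (γ * μ.real (⋂ k ∈ T, (A k)ᶜ)) := by
    calc ∑ j ∈ S \ T, μ.real (A j ∩ ⋂ k ∈ T, (A k)ᶜ)
        ≤ ∑ j ∈ S \ T, γ * μ.real (⋂ k ∈ T, (A k)ᶜ) := by
          refine sum_le_sum fun j hj => ?_
          obtain ⟨hjS, hjT⟩ := mem_sdiff.mp hj
          exact ih T ((ssubset_iff_of_subset hTS).mpr ⟨j, hjS, hjT⟩) j hjT
      _ = #(S \ T) * (γ * μ.real (⋂ k ∈ T, (A k)ᶜ)) := by rw [sum_const, nsmul_eq_mul]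
      _ ≤ #(J i) * (γ * μ.real (⋂ k ∈ T, (A k)ᶜ)) :=
          mul_le_mul_of_nonneg_right (mod_cast card_le_card hST) (mul_nonneg hγ hPT)
  have hunion := measureReal_biInter_compl_le_add_sum μ A S T
  have hT : max (1 - γ * #(J i)) 0 * μ.real (⋂ k ∈ T, (A k)ᶜ) ≤ μ.real (⋂ k ∈ S, (A k)ᶜ) := by
    rcases max_cases (1 - γ * #(J i)) 0 with ⟨h, _⟩ | ⟨h, _⟩ <;> rw [h]
    · linarith
    · simp
  calc μ.real (A i ∩ ⋂ k ∈ S, (A k)ᶜ)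
      ≤ μ.real (A i ∩ ⋂ k ∈ T, (A k)ᶜ) :=
        measureReal_mono (Set.inter_subset_inter_right _ (Set.biInter_subset_biInter_left hTS))
    _ ≤ γ * max (1 - γ * #(J i)) 0 * μ.real (⋂ k ∈ T, (A k)ᶜ) := hcond i T inter_subset_right
    _ ≤ γ * μ.real (⋂ k ∈ S, (A k)ᶜ) := by
        rw [mul_assoc]
        exact mul_le_mul_of_nonneg_left hT hγ

end

open MeasureTheory Finset in
theorem stmt_17_general {Ω : Type*} [MeasurableSpace Ω] (μ : Measure Ω)
    [IsProbabilityMeasure μ] (n : ℕ) (A : Fin n → Set Ω)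
    (J K : Fin n → Finset (Fin n))
    (hpart : ∀ i, Disjoint (J i) (K i) ∧ J i ∪ K i = Finset.univ.erase i)
    (γ : ℝ) (hγ0 : 0 ≤ γ) (hγ1 : γ < 1)
    (hcond : ∀ i : Fin n, ∀ K' ⊆ K i,
      μ (A i ∩ ⋂ k ∈ K', (A k)ᶜ) ≤
        ENNReal.ofReal (γ * (1 - γ * (Finset.univ.sup fun j => (J j).card : ℕ))) *
          μ (⋂ k ∈ K', (A k)ᶜ)) :
    0 < μ (⋂ i, (A i)ᶜ) := by
  have hcondReal : ∀ i, ∀ T ⊆ K i, μ.real (A i ∩ ⋂ k ∈ T, (A k)ᶜ) ≤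
      γ * max (1 - γ * #(J i)) 0 * μ.real (⋂ k ∈ T, (A k)ᶜ) := by
    intro i T hT
    have hJi : (#(J i) : ℝ) ≤ (univ.sup fun j => #(J j) : ℕ) :=
      mod_cast le_sup (f := fun j => #(J j)) (mem_univ i)
    refine (measureReal_le_max_mul_of_le_ofReal_mul μ (hcond i T hT)).trans ?_
    gcongr
    refine max_le ?_ (by positivity)
    calc γ * (1 - γ * (univ.sup fun j => #(J j) : ℕ)) ≤ γ * (1 - γ * #(J i)) := by gcongr
      _ ≤ γ * max (1 - γ * #(J i)) 0 := by gcongr; exact le_max_left _ _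
  have hlocal := measureReal_inter_biInter_compl_le μ A (fun i => (hpart i).2.ge) hγ0 hcondReal
  have hbound := one_sub_pow_card_mul_le_measureReal_biInter_compl μ A hγ1.le hlocal univ
  have hreal : 0 < μ.real (⋂ i, (A i)ᶜ) := by
    simpa using (by positivity : 0 < (1 - γ) ^ n).trans_le (by simpa using hbound)
  exact (ENNReal.toReal_pos_iff.mp hreal).1

open MeasureTheory Finset in
/-- Modified local lemma: events `A i` with partitions `(J i, K i)` of `univ \ {i}`;
if there is `γ ∈ [0,1)` such that for every `i` and `K' ⊆ K i`, conditionally on the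
intersection of the complements of the events indexed by `K'` (an event of positive
probability), the probability of `A i` is at most `γ(1 − γ max_j |J j|)`, then with
positive probability no event occurs. -/
theorem stmt_17 {Ω : Type*} [MeasurableSpace Ω] (μ : Measure Ω)
    [IsProbabilityMeasure μ] (n : ℕ) (A : Fin n → Set Ω)
    (hA : ∀ i, MeasurableSet (A i)) (J K : Fin n → Finset (Fin n))
    (hpart : ∀ i, Disjoint (J i) (K i) ∧ J i ∪ K i = Finset.univ.erase i)
    (γ : ℝ) (hγ0 : 0 ≤ γ) (hγ1 : γ < 1)
    (hpos : ∀ i : Fin n, ∀ K' ⊆ K i, 0 < μ (⋂ k ∈ K', (A k)ᶜ))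
    (hcond : ∀ i : Fin n, ∀ K' ⊆ K i,
      μ (A i ∩ ⋂ k ∈ K', (A k)ᶜ) ≤
        ENNReal.ofReal (γ * (1 - γ * (Finset.univ.sup fun j => (J j).card : ℕ))) *
          μ (⋂ k ∈ K', (A k)ᶜ)) :
    0 < μ (⋂ i, (A i)ᶜ) :=
  stmt_17_general μ n A J K hpart γ hγ0 hγ1 hcond
end
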